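/- For all node signs ξ_r, η_r, ξ_s, η_s ∈ {−1, 1}, all a, b, h > 0, all E ∈ ℝ, and all μ ∈ ℝ with (1+μ)(1−2μ) ≠ 0, setting γ = b/a, the 2×2 matrix (a·b·h/4) ∫_{−1}^{1} ∫_{−1}^{1} β_r^{inc}(ξ,η)ᵀ χ_E β_s^{inc}(ξ,η) dξ dη equals (E·h/(4(1+μ)(1−2μ))) · [[γ·ξ_r ξ_s·((1−μ) + ((1−μ−μ²−μ³)/3)·η_r η_s), μ·ξ_r η_s], [μ·η_r ξ_s, (η_r η_s/γ)·((1−μ) + ((1−μ−μ²−μ³)/3)·ξ_r ξ_s)]]. -/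
import Mathlib


open MeasureTheory Matrix

/-- Strain–displacement matrix of the incompatible bilinear rectangular element. -/
noncomputable def betaInc (a b μ ξr ηr ξ η : ℝ) : Matrix (Fin 3) (Fin 2) ℝ :=
  (1 / 2 : ℝ) • !![ξr * (1 + ηr * η) / a, -(μ * ξr * ηr * ξ) / b;
                   -(μ * ξr * ηr * η) / a, ηr * (1 + ξr * ξ) / b;
                   ηr / b, ξr / a]

/-- Normal-deformation part of the plane-strain elasticity matrix. -/
noncomputable def chiE (E μ : ℝ) : Matrix (Fin 3) (Fin 3) ℝ :=
  (E / ((1 + μ) * (1 - 2 * μ))) • !![1 - μ, μ, 0; μ, 1 - μ, 0; 0, 0, 0]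

lemma int_poly2 (c0 c1 c2 : ℝ) :
    ∫ x in (-1:ℝ)..1, (c0 + c1 * x + c2 * x ^ 2) = 2 * c0 + 2 / 3 * c2 := by
  have h1 : IntervalIntegrable (fun x : ℝ => c0) volume (-1) 1 := intervalIntegrable_const
  have h2 : IntervalIntegrable (fun x : ℝ => c1 * x) volume (-1) 1 := by
    apply Continuous.intervalIntegrable; continuity
  have h3 : IntervalIntegrable (fun x : ℝ => c2 * x ^ 2) volume (-1) 1 := by
    apply Continuous.intervalIntegrable; continuity
  rw [intervalIntegral.integral_add (h1.add h2) h3, intervalIntegral.integral_add h1 h2,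
    intervalIntegral.integral_const, intervalIntegral.integral_const_mul,
    intervalIntegral.integral_const_mul, integral_id, integral_pow]
  norm_num
  ring

lemma dbl_int (c00 c10 c20 c01 c11 c21 c02 c12 c22 : ℝ) :
    (∫ ξ in (-1:ℝ)..1, ∫ η in (-1:ℝ)..1,
      (c00 + c10 * ξ + c20 * ξ ^ 2 + (c01 + c11 * ξ + c21 * ξ ^ 2) * η
        + (c02 + c12 * ξ + c22 * ξ ^ 2) * η ^ 2))
      = 4 * c00 + 4 / 3 * c20 + 4 / 3 * c02 + 4 / 9 * c22 := by
  have inner : ∀ ξ : ℝ, (∫ η in (-1:ℝ)..1,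
      (c00 + c10 * ξ + c20 * ξ ^ 2 + (c01 + c11 * ξ + c21 * ξ ^ 2) * η
        + (c02 + c12 * ξ + c22 * ξ ^ 2) * η ^ 2))
      = 2 * (c00 + c10 * ξ + c20 * ξ ^ 2) + 2 / 3 * (c02 + c12 * ξ + c22 * ξ ^ 2) := by
    intro ξ
    exact int_poly2 (c00 + c10 * ξ + c20 * ξ ^ 2) (c01 + c11 * ξ + c21 * ξ ^ 2)
      (c02 + c12 * ξ + c22 * ξ ^ 2)
  simp_rw [inner]
  have key := int_poly2 (2 * c00 + 2 / 3 * c02) (2 * c10 + 2 / 3 * c12) (2 * c20 + 2 / 3 * c22)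
  have congr1 : (∫ ξ in (-1:ℝ)..1,
      (2 * (c00 + c10 * ξ + c20 * ξ ^ 2) + 2 / 3 * (c02 + c12 * ξ + c22 * ξ ^ 2)))
      = ∫ ξ in (-1:ℝ)..1, ((2 * c00 + 2 / 3 * c02) + (2 * c10 + 2 / 3 * c12) * ξ
        + (2 * c20 + 2 / 3 * c22) * ξ ^ 2) := by
    apply intervalIntegral.integral_congr
    intro ξ _
    ring
  rw [congr1, key]
  ring

set_option maxHeartbeats 2000000 in
theorem normal_stiffness_block_incompatible
    (ξr ηr ξs ηs a b h E μ : ℝ)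
    (hξr : ξr = -1 ∨ ξr = 1) (hηr : ηr = -1 ∨ ηr = 1)
    (hξs : ξs = -1 ∨ ξs = 1) (hηs : ηs = -1 ∨ ηs = 1)
    (ha : 0 < a) (hb : 0 < b) (hh : 0 < h)
    (hμ : (1 + μ) * (1 - 2 * μ) ≠ 0) :
    (Matrix.of fun i j : Fin 2 =>
        (a * b * h / 4) *
          ∫ ξ in (-1:ℝ)..1, ∫ η in (-1:ℝ)..1,
            ((betaInc a b μ ξr ηr ξ η)ᵀ * chiE E μ * betaInc a b μ ξs ηs ξ η) i j) =
      (E * h / (4 * (1 + μ) * (1 - 2 * μ))) •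
        !![(b / a) * (ξr * ξs) * ((1 - μ) + ((1 - μ - μ ^ 2 - μ ^ 3) / 3) * (ηr * ηs)),
             μ * (ξr * ηs);
           μ * (ηr * ξs),
             (ηr * ηs / (b / a)) * ((1 - μ) + ((1 - μ - μ ^ 2 - μ ^ 3) / 3) * (ξr * ξs))] := by
  have ha' := ha.ne'
  have hb' := hb.ne'
  have h1 : (1 + μ) ≠ 0 := fun h0 => hμ (by rw [h0]; ring)
  have h2 : (1 - 2 * μ) ≠ 0 := fun h0 => hμ (by rw [h0]; ring)
  ext i j
  fin_cases i <;> fin_cases j <;>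
    simp only [Matrix.of_apply, Matrix.smul_apply, Matrix.cons_val', Matrix.cons_val_zero,
      Matrix.cons_val_one, Matrix.head_cons, Matrix.empty_val', Matrix.cons_val_fin_one,
      Matrix.head_fin_const, smul_eq_mul, Fin.zero_eta, Fin.mk_one]
  · rw [show (∫ ξ in (-1:ℝ)..1, ∫ η in (-1:ℝ)..1,
        ((betaInc a b μ ξr ηr ξ η)ᵀ * chiE E μ * betaInc a b μ ξs ηs ξ η) 0 0)
      = ∫ ξ in (-1:ℝ)..1, ∫ η in (-1:ℝ)..1,
        ((E / ((1 + μ) * (1 - 2 * μ))) * ξr * ξs * (1 - μ) / (4 * a ^ 2) + (0:ℝ) * ξ + (0:ℝ) * ξ ^ 2 + ((E / ((1 + μ) * (1 - 2 * μ))) * ξr * ξs * ((1 - μ) * (ηr + ηs) - μ ^ 2 * (ηr + ηs)) / (4 * a ^ 2) + (0:ℝ) * ξ + (0:ℝ) * ξ ^ 2) * η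
          + ((E / ((1 + μ) * (1 - 2 * μ))) * ξr * ξs * (ηr * ηs) * (1 - μ - μ ^ 2 - μ ^ 3) / (4 * a ^ 2) + (0:ℝ) * ξ + (0:ℝ) * ξ ^ 2) * η ^ 2) from ?_, dbl_int]
    · field_simp
      ring
    · apply intervalIntegral.integral_congr; intro ξ _
      apply intervalIntegral.integral_congr; intro η _
      simp [betaInc, chiE, Matrix.mul_apply, Matrix.transpose_apply, Matrix.cons_transpose,
        Matrix.vecHead, Matrix.vecTail, Fin.sum_univ_three]
      ring
  · rw [show (∫ ξ in (-1:ℝ)..1, ∫ η in (-1:ℝ)..1,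
        ((betaInc a b μ ξr ηr ξ η)ᵀ * chiE E μ * betaInc a b μ ξs ηs ξ η) 0 1)
      = ∫ ξ in (-1:ℝ)..1, ∫ η in (-1:ℝ)..1,
        ((E / ((1 + μ) * (1 - 2 * μ))) * μ * ξr * ηs / (4 * a * b) + (E / ((1 + μ) * (1 - 2 * μ))) * μ ^ 2 * ξr * ξs * ηs / (4 * a * b) * ξ + (0:ℝ) * ξ ^ 2 + ((E / ((1 + μ) * (1 - 2 * μ))) * μ ^ 2 * ξr * ηr * ηs / (4 * a * b) + (E / ((1 + μ) * (1 - 2 * μ))) * ξr * ξs * ηr * ηs * (-μ + 2 * μ ^ 2 + μ ^ 3) / (4 * a * b) * ξ + (0:ℝ) * ξ ^ 2) * η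
          + ((0:ℝ) + (0:ℝ) * ξ + (0:ℝ) * ξ ^ 2) * η ^ 2) from ?_, dbl_int]
    · field_simp
      ring
    · apply intervalIntegral.integral_congr; intro ξ _
      apply intervalIntegral.integral_congr; intro η _
      simp [betaInc, chiE, Matrix.mul_apply, Matrix.transpose_apply, Matrix.cons_transpose,
        Matrix.vecHead, Matrix.vecTail, Fin.sum_univ_three]
      ring
  · rw [show (∫ ξ in (-1:ℝ)..1, ∫ η in (-1:ℝ)..1,
        ((betaInc a b μ ξr ηr ξ η)ᵀ * chiE E μ * betaInc a b μ ξs ηs ξ η) 1 0)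
      = ∫ ξ in (-1:ℝ)..1, ∫ η in (-1:ℝ)..1,
        ((E / ((1 + μ) * (1 - 2 * μ))) * μ * ηr * ξs / (4 * a * b) + (E / ((1 + μ) * (1 - 2 * μ))) * μ ^ 2 * ξr * ηr * ξs / (4 * a * b) * ξ + (0:ℝ) * ξ ^ 2 + ((E / ((1 + μ) * (1 - 2 * μ))) * μ ^ 2 * ηr * ηs * ξs / (4 * a * b) + (E / ((1 + μ) * (1 - 2 * μ))) * ξr * ξs * ηr * ηs * (-μ + 2 * μ ^ 2 + μ ^ 3) / (4 * a * b) * ξ + (0:ℝ) * ξ ^ 2) * η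
          + ((0:ℝ) + (0:ℝ) * ξ + (0:ℝ) * ξ ^ 2) * η ^ 2) from ?_, dbl_int]
    · field_simp
      ring
    · apply intervalIntegral.integral_congr; intro ξ _
      apply intervalIntegral.integral_congr; intro η _
      simp [betaInc, chiE, Matrix.mul_apply, Matrix.transpose_apply, Matrix.cons_transpose,
        Matrix.vecHead, Matrix.vecTail, Fin.sum_univ_three]
      ring
  · rw [show (∫ ξ in (-1:ℝ)..1, ∫ η in (-1:ℝ)..1,
        ((betaInc a b μ ξr ηr ξ η)ᵀ * chiE E μ * betaInc a b μ ξs ηs ξ η) 1 1)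
      = ∫ ξ in (-1:ℝ)..1, ∫ η in (-1:ℝ)..1,
        ((E / ((1 + μ) * (1 - 2 * μ))) * (1 - μ) * ηr * ηs / (4 * b ^ 2) + (E / ((1 + μ) * (1 - 2 * μ))) * ηr * ηs * (ξr + ξs) * ((1 - μ) - μ ^ 2) / (4 * b ^ 2) * ξ + (E / ((1 + μ) * (1 - 2 * μ))) * ηr * ηs * (ξr * ξs) * (1 - μ - μ ^ 2 - μ ^ 3) / (4 * b ^ 2) * ξ ^ 2 + ((0:ℝ) + (0:ℝ) * ξ + (0:ℝ) * ξ ^ 2) * η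
          + ((0:ℝ) + (0:ℝ) * ξ + (0:ℝ) * ξ ^ 2) * η ^ 2) from ?_, dbl_int]
    · field_simp
      ring
    · apply intervalIntegral.integral_congr; intro ξ _
      apply intervalIntegral.integral_congr; intro η _
      simp [betaInc, chiE, Matrix.mul_apply, Matrix.transpose_apply, Matrix.cons_transpose,
        Matrix.vecHead, Matrix.vecTail, Fin.sum_univ_three]
      ring
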